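/- There are no V-cycles: there is no x ∈ ℝ with x ≥ 1 and no l ∈ ℕ with l ≥ 1 such that V^l(x) = x. -/

import Mathlib

/-!
Each step of `V` multiplies by `1/2` or `3/2`, so `V^[l] x = 3^a * x / 2^l` for some `a`.
A cycle through `x ≠ 0` would then force `3^a = 2^l` with `l ≥ 1`, which parity forbids.
-/

/-- The function `V x = x/2` if `⌊x⌋` is even, `3x/2` if `⌊x⌋` is odd. -/
noncomputable def V (x : ℝ) : ℝ := if Even ⌊x⌋ then x / 2 else 3 * x / 2

lemma exists_iterate_V_eq_three_pow_mul_div_two_pow (l : ℕ) (x : ℝ) :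
    ∃ a : ℕ, V^[l] x = 3 ^ a * x / 2 ^ l := by
  induction l generalizing x with
  | zero => exact ⟨0, by simp⟩
  | succ n ih =>
    obtain ⟨a, ha⟩ := ih (V x)
    rw [Function.iterate_succ_apply, ha]
    by_cases h : Even ⌊x⌋
    · exact ⟨a, by rw [V, if_pos h]; ring⟩
    · exact ⟨a + 1, by rw [V, if_neg h]; ring⟩

lemma three_pow_ne_two_pow (a : ℕ) {l : ℕ} (hl : l ≠ 0) : (3 : ℝ) ^ a ≠ 2 ^ l := by
  have hodd : Odd (3 ^ a) := Odd.pow (by decide : Odd 3)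
  have heven : Even (2 ^ l) := (Nat.even_pow' hl).mpr even_two
  exact_mod_cast fun h : 3 ^ a = 2 ^ l => Nat.not_even_iff_odd.mpr hodd (h ▸ heven)

/-- There are no `V`-cycles. -/
theorem no_V_cycles (x : ℝ) (hx : 1 ≤ x) (l : ℕ) (hl : 1 ≤ l) :
    V^[l] x ≠ x := by
  obtain ⟨a, ha⟩ := exists_iterate_V_eq_three_pow_mul_div_two_pow l x
  rw [ha, Ne, div_eq_iff (by positivity)]
  intro h
  have hx0 : x ≠ 0 := by positivity
  exact three_pow_ne_two_pow a (by omega) (mul_right_cancel₀ hx0 (h.trans (mul_comm _ _)))
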